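/- arXiv:math/9907025 — 5 statements merged into one kernel-verified Lean document; each statement's English description precedes it below -/
import Mathlib

section
/- Let u : ℝ² → ℝ² be C¹ with div u = ∂u₁/∂x + ∂u₂/∂y = 0 everywhere, and let ω : ℝ × ℝ² → ℝ be C¹ and satisfy the advection (Liouville) equation ∂ω/∂t(t,x) + u(x)·∇ₓω(t,x) = 0 for all (t,x). Suppose there is a compact set K ⊆ ℝ² with ω(t,x) = 0 for all t ∈ ℝ and all x ∉ K. Then for every C¹ function f : ℝ → ℝ with f(0) = 0, the generalized enstrophy C_f(t) = ∫_{ℝ²} f(ω(t,x)) dx is independent of t. -/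
/-!
Write `g = f ∘ ω`. By the chain rule `g` solves the same advection equation, vanishes outside
`K`, and is C¹. Differentiating under the integral sign, `d/dt ∫ g = ∫ ∂ₜg = -∫ ∇ₓg · u`, and
`∇ₓg · u = div (g u)` because `div u = 0`; the integral of the divergence of the compactly
supported field `g u` vanishes (integration by parts against the constant `1`).
-/

open MeasureTheory Metric Set

section CompactSupport

variable {E : Type*} [NormedAddCommGroup E] [NormedSpace ℝ E]
  [MeasurableSpace E] [BorelSpace E] {μ : Measure E} {f : E → ℝ}

theorem ContDiff.integrable_fderiv_apply [IsFiniteMeasureOnCompacts μ] (hf : ContDiff ℝ 1 f)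
    (hf_supp : HasCompactSupport f) (v : E) : Integrable (fun x => fderiv ℝ f x v) μ :=
  ((hf.continuous_fderiv one_ne_zero).clm_apply continuous_const).integrable_of_hasCompactSupport
    (hf_supp.fderiv_apply ℝ v)

theorem integral_fderiv_apply_eq_zero [FiniteDimensional ℝ E] [μ.IsAddHaarMeasure]
    (hf : ContDiff ℝ 1 f) (hf_supp : HasCompactSupport f) (v : E) :
    ∫ x, fderiv ℝ f x v ∂μ = 0 := by
  have := integral_mul_fderiv_eq_neg_fderiv_mul_of_integrable (μ := μ) (f := fun _ => (1 : ℝ))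
    (v := v) (by simp) (by simpa using hf.integrable_fderiv_apply hf_supp v)
    (by simpa using hf.continuous.integrable_of_hasCompactSupport hf_supp)
    (fun x _ => differentiableAt_const _) (fun x _ => hf.differentiable one_ne_zero x)
  simpa using this

end CompactSupport

theorem ContinuousLinearMap.apply_eq_fst_mul_add_snd_mul (L : ℝ × ℝ →L[ℝ] ℝ) (w : ℝ × ℝ) :
    L w = w.1 * L (1, 0) + w.2 * L (0, 1) := by
  conv_lhs => rw [show w = w.1 • ((1 : ℝ), (0 : ℝ)) + w.2 • ((0 : ℝ), (1 : ℝ)) by ext <;> simp]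
  simp only [map_add, map_smul, smul_eq_mul]

theorem integral_fderiv_apply_eq_zero_of_divergence_eq_zero {u : ℝ × ℝ → ℝ × ℝ}
    (hu : ContDiff ℝ 1 u)
    (hdiv : ∀ p : ℝ × ℝ,
      fderiv ℝ (fun q => (u q).1) p (1, 0) + fderiv ℝ (fun q => (u q).2) p (0, 1) = 0)
    {h : ℝ × ℝ → ℝ} (hh : ContDiff ℝ 1 h) (hh_supp : HasCompactSupport h) :
    ∫ x, fderiv ℝ h x (u x) = 0 := by
  have hφ : ContDiff ℝ 1 fun x => (u x).1 * h x := hu.fst.mul hh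
  have hψ : ContDiff ℝ 1 fun x => (u x).2 * h x := hu.snd.mul hh
  have hflux : ∀ x, fderiv ℝ h x (u x) =
      fderiv ℝ (fun x => (u x).1 * h x) x (1, 0) + fderiv ℝ (fun x => (u x).2 * h x) x (0, 1) := by
    intro x
    have hh' := hh.differentiable one_ne_zero x
    rw [fderiv_fun_mul (hu.fst.differentiable one_ne_zero x) hh',
      fderiv_fun_mul (hu.snd.differentiable one_ne_zero x) hh',
      ContinuousLinearMap.apply_eq_fst_mul_add_snd_mul _ (u x)]
    simp only [add_apply, smul_apply, smul_eq_mul]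
    linear_combination (-h x) * hdiv x
  simp_rw [hflux]
  rw [integral_add (hφ.integrable_fderiv_apply hh_supp.mul_left _)
      (hψ.integrable_fderiv_apply hh_supp.mul_left _),
    integral_fderiv_apply_eq_zero hφ hh_supp.mul_left,
    integral_fderiv_apply_eq_zero hψ hh_supp.mul_left, add_zero]

section TimeSlices

variable {E F : Type*} [NormedAddCommGroup E] [NormedSpace ℝ E] [NormedAddCommGroup F]
  [NormedSpace ℝ F] {G : ℝ × E → F}

theorem DifferentiableAt.hasDerivAt_comp_prodMk_const {t : ℝ} {x : E}
    (hG : DifferentiableAt ℝ G (t, x)) :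
    HasDerivAt (fun s => G (s, x)) (fderiv ℝ G (t, x) (1, 0)) t :=
  hG.hasFDerivAt.comp_hasDerivAt t ((hasDerivAt_id t).prodMk (hasDerivAt_const t x))

theorem ContDiff.continuous_deriv_comp_prodMk_const (hG : ContDiff ℝ 1 G) :
    Continuous fun p : ℝ × E => deriv (fun s => G (s, p.2)) p.1 := by
  simp_rw [fun p : ℝ × E => ((hG.differentiable one_ne_zero p).hasDerivAt_comp_prodMk_const).deriv]
  exact (hG.continuous_fderiv one_ne_zero).clm_apply continuous_const

theorem ContDiff.hasDerivAt_integral_of_forall_notMem_eq_zero [CompleteSpace F]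
    [MeasurableSpace E] [OpensMeasurableSpace E] {μ : Measure E} [IsFiniteMeasureOnCompacts μ]
    (hG : ContDiff ℝ 1 G) {K : Set E} (hK : IsCompact K) (hGK : ∀ t, ∀ x ∉ K, G (t, x) = 0)
    (t₀ : ℝ) :
    HasDerivAt (fun t => ∫ x, G (t, x) ∂μ) (∫ x, deriv (fun s => G (s, x)) t₀ ∂μ) t₀ := by
  set G' : ℝ → E → F := fun t x => deriv (fun s => G (s, x)) t
  have hG'_cont : Continuous fun p : ℝ × E => G' p.1 p.2 := hG.continuous_deriv_comp_prodMk_const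
  have hG'K : ∀ t, ∀ x ∉ K, G' t x = 0 := fun t x hx => by
    simp [G', funext fun s => hGK s x hx]
  have hG_int : ∀ t, Integrable (fun x => G (t, x)) μ := fun t =>
    (hG.continuous.comp (Continuous.prodMk_right t)).integrable_of_hasCompactSupport
      (HasCompactSupport.intro hK (hGK t))
  have hG'_int : Integrable (G' t₀) μ :=
    (hG'_cont.comp (Continuous.prodMk_right t₀)).integrable_of_hasCompactSupport
      (HasCompactSupport.intro hK (hG'K t₀))
  obtain ⟨M, hM⟩ := ((isCompact_closedBall t₀ 1).prod hK).exists_bound_of_continuousOn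
    hG'_cont.continuousOn
  have hbound : ∀ x, ∀ t ∈ ball t₀ 1, ‖G' t x‖ ≤ K.indicator (fun _ => M) x := by
    intro x t ht
    by_cases hx : x ∈ K
    · rw [indicator_of_mem hx]
      exact hM (t, x) ⟨ball_subset_closedBall ht, hx⟩
    · simp [indicator_of_notMem hx, hG'K t x hx]
  exact (hasDerivAt_integral_of_dominated_loc_of_deriv_le (ball_mem_nhds t₀ one_pos)
    (.of_forall fun t => (hG_int t).aestronglyMeasurable) (hG_int t₀)
    hG'_int.aestronglyMeasurable (.of_forall hbound)
    ((integrable_indicator_iff hK.measurableSet).2 (integrableOn_const hK.measure_lt_top.ne))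
    (.of_forall fun x t _ =>
      (hG.differentiable one_ne_zero (t, x)).hasDerivAt_comp_prodMk_const.differentiableAt
        |>.hasDerivAt)).2

end TimeSlices

section Advection

variable {E : Type*} [NormedAddCommGroup E] [NormedSpace ℝ E]

def IsAdvectionSolution (u : E → E) (ω : ℝ × E → ℝ) : Prop :=
  ∀ (t : ℝ) (x : E), fderiv ℝ (fun s => ω (s, x)) t 1 + fderiv ℝ (fun y => ω (t, y)) x (u x) = 0

theorem IsAdvectionSolution.comp {u : E → E} {ω : ℝ × E → ℝ} (hadv : IsAdvectionSolution u ω)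
    (hω : Differentiable ℝ ω) {f : ℝ → ℝ} (hf : Differentiable ℝ f) :
    IsAdvectionSolution u (f ∘ ω) := by
  intro t x
  have htime : HasDerivAt (fun s => f (ω (s, x)))
      (deriv f (ω (t, x)) * deriv (fun s => ω (s, x)) t) t :=
    (hf _).hasDerivAt.comp t
      ((hω _).comp t (differentiableAt_id.prodMk (differentiableAt_const x))).hasDerivAt
  have hspace : HasFDerivAt (fun y => f (ω (t, y)))
      (deriv f (ω (t, x)) • fderiv ℝ (fun y => ω (t, y)) x) x :=
    (hf _).hasDerivAt.comp_hasFDerivAt x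
      ((hω _).comp x ((differentiableAt_const t).prodMk differentiableAt_id)).hasFDerivAt
  simp only [Function.comp_apply, fderiv_apply_one_eq_deriv, htime.deriv, hspace.fderiv,
    smul_apply, smul_eq_mul, ← mul_add]
  exact mul_eq_zero_of_right _ (hadv t x)

end Advection

theorem IsAdvectionSolution.integral_eq {u : ℝ × ℝ → ℝ × ℝ} (hu : ContDiff ℝ 1 u)
    (hdiv : ∀ p : ℝ × ℝ,
      fderiv ℝ (fun q => (u q).1) p (1, 0) + fderiv ℝ (fun q => (u q).2) p (0, 1) = 0)
    {ω : ℝ × (ℝ × ℝ) → ℝ} (hadv : IsAdvectionSolution u ω) (hω : ContDiff ℝ 1 ω)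
    {K : Set (ℝ × ℝ)} (hK : IsCompact K) (hωK : ∀ t, ∀ x ∉ K, ω (t, x) = 0) (t₁ t₂ : ℝ) :
    ∫ x, ω (t₁, x) = ∫ x, ω (t₂, x) := by
  have hderiv : ∀ t, HasDerivAt (fun t => ∫ x, ω (t, x)) 0 t := by
    intro t
    have hωt : ContDiff ℝ 1 fun y => ω (t, y) := hω.comp (contDiff_const.prodMk contDiff_id)
    refine (hω.hasDerivAt_integral_of_forall_notMem_eq_zero hK hωK t).congr_deriv ?_
    calc ∫ x, deriv (fun s => ω (s, x)) t = ∫ x, -fderiv ℝ (fun y => ω (t, y)) x (u x) :=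
          integral_congr_ae (.of_forall fun x => eq_neg_of_add_eq_zero_left (hadv t x))
      _ = 0 := by
          rw [integral_neg, integral_fderiv_apply_eq_zero_of_divergence_eq_zero hu hdiv hωt
            (HasCompactSupport.intro hK (hωK t)), neg_zero]
  exact is_const_of_deriv_eq_zero (fun t => (hderiv t).differentiableAt)
    (fun t => (hderiv t).deriv) t₁ t₂

/-- If `u` is a C¹ divergence-free velocity field on ℝ², `ω` is a C¹ solution
of the advection (Liouville) equation `∂ω/∂t + u·∇ω = 0` vanishing outside a
compact set `K`, then for every C¹ function `f` with `f 0 = 0` the generalized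
enstrophy `C_f(t) = ∫ f(ω(t,x)) dx` is independent of `t`. -/
theorem generalized_enstrophy_conserved
    (u : ℝ × ℝ → ℝ × ℝ) (hu : ContDiff ℝ 1 u)
    (hdiv : ∀ p : ℝ × ℝ,
      fderiv ℝ (fun q => (u q).1) p (1, 0) + fderiv ℝ (fun q => (u q).2) p (0, 1) = 0)
    (ω : ℝ × (ℝ × ℝ) → ℝ) (hω : ContDiff ℝ 1 ω)
    (hadv : ∀ (t : ℝ) (x : ℝ × ℝ),
      fderiv ℝ (fun s => ω (s, x)) t 1 + fderiv ℝ (fun y => ω (t, y)) x (u x) = 0)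
    (K : Set (ℝ × ℝ)) (hK : IsCompact K)
    (hsupp : ∀ (t : ℝ) (x : ℝ × ℝ), x ∉ K → ω (t, x) = 0)
    (f : ℝ → ℝ) (hf : ContDiff ℝ 1 f) (hf0 : f 0 = 0) :
    ∀ t₁ t₂ : ℝ, ∫ x : ℝ × ℝ, f (ω (t₁, x)) = ∫ x : ℝ × ℝ, f (ω (t₂, x)) :=
  (IsAdvectionSolution.comp hadv (hω.differentiable one_ne_zero)
    (hf.differentiable one_ne_zero)).integral_eq hu hdiv (hf.comp hω) hK
    fun t x hx => by simp [hsupp t x hx, hf0]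
end

section
/- Let N ≥ 1 and for each index k = (i,j) ∈ (Fin N) × (Fin N) let C_k = [i/N, (i+1)/N) × [j/N, (j+1)/N) ⊆ ℝ², so that the N² cells C_k partition the square Q = [0,1) × [0,1). Let φ : Q → Q be a bijection, measurable with measurable inverse, which preserves Lebesgue measure (the measure of φ⁻¹(A) equals the measure of A for every measurable A ⊆ Q). Then there exists a permutation σ of (Fin N) × (Fin N) such that φ(C_k) ∩ C_{σ(k)} ≠ ∅ for every index k. -/
open MeasureTheory

/-- Interval membership forces the floor value. -/
lemma lax_aux_unique {N i i' : ℕ} {x : ℝ} (hN : (0:ℝ) < N)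
    (h1 : (i:ℝ)/N ≤ x) (h2 : x < ((i:ℝ)+1)/N)
    (h1' : (i':ℝ)/N ≤ x) (h2' : x < ((i':ℝ)+1)/N) : i = i' := by
  have a1 : (i:ℝ) ≤ x * N := by
    have := (div_le_iff₀ hN).mp h1; linarith
  have a2 : x * N < (i':ℝ) + 1 := (lt_div_iff₀ hN).mp h2'
  have a1' : (i':ℝ) ≤ x * N := by
    have := (div_le_iff₀ hN).mp h1'; linarith
  have a2' : x * N < (i:ℝ) + 1 := (lt_div_iff₀ hN).mp h2
  have : (i:ℝ) < (i':ℝ) + 1 := lt_of_le_of_lt a1 a2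
  have h3 : i ≤ i' := by exact_mod_cast Nat.lt_add_one_iff.mp (by exact_mod_cast this)
  have : (i':ℝ) < (i:ℝ) + 1 := lt_of_le_of_lt a1' a2'
  have h4 : i' ≤ i := by exact_mod_cast Nat.lt_add_one_iff.mp (by exact_mod_cast this)
  omega

/-- Every point of `[0,1)` lies in one of the `N` subintervals. -/
lemma lax_aux_cover {N : ℕ} (hN : 1 ≤ N) {x : ℝ} (hx : x ∈ Set.Ico (0:ℝ) 1) :
    ∃ i : Fin N, x ∈ Set.Ico ((i:ℝ)/N) (((i:ℝ)+1)/N) := by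
  have hNpos : (0:ℝ) < N := by exact_mod_cast hN
  have hx0 : 0 ≤ x * N := mul_nonneg hx.1 hNpos.le
  have hlt : x * N < N := by
    have := hx.2
    nlinarith
  have hiN : ⌊x * N⌋₊ < N := by
    rw [Nat.floor_lt hx0]; exact_mod_cast hlt
  refine ⟨⟨⌊x * N⌋₊, hiN⟩, ?_, ?_⟩
  · rw [div_le_iff₀ hNpos]
    exact Nat.floor_le hx0
  · rw [lt_div_iff₀ hNpos]
    exact_mod_cast Nat.lt_floor_add_one (x * N)

/-- Lax's theorem: for any measure-preserving measurable bijection `φ` of the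
unit square `Q = [0,1)²` (Lebesgue measure on `Q` given by `volume.comap
Subtype.val`), there is a permutation `σ` of the `N²` lattice cells `C_k`
such that `φ(C_k)` meets `C_{σ(k)}` for every `k`. -/
theorem lax_lattice_permutation
    (N : ℕ) (hN : 1 ≤ N)
    (C : Fin N × Fin N → Set (ℝ × ℝ))
    (hC : ∀ k : Fin N × Fin N,
      C k = Set.Ico ((k.1 : ℝ) / N) (((k.1 : ℝ) + 1) / N) ×ˢ
            Set.Ico ((k.2 : ℝ) / N) (((k.2 : ℝ) + 1) / N))
    (Q : Set (ℝ × ℝ)) (hQ : Q = Set.Ico (0 : ℝ) 1 ×ˢ Set.Ico (0 : ℝ) 1)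
    (φ : Q ≃ Q) (hφ : Measurable φ) (hφinv : Measurable φ.symm)
    (hpres : ∀ A : Set Q, MeasurableSet A →
      Measure.comap Subtype.val volume (φ ⁻¹' A) =
      Measure.comap Subtype.val volume A) :
    ∃ σ : Equiv.Perm (Fin N × Fin N),
      ∀ k : Fin N × Fin N,
        ∃ x : Q, (x : ℝ × ℝ) ∈ C k ∧ ((φ x : Q) : ℝ × ℝ) ∈ C (σ k) := by
  classical
  have hNpos : (0:ℝ) < N := by exact_mod_cast hN
  set μ := Measure.comap (Subtype.val : Q → ℝ × ℝ) volume with hμ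
  have hQm : MeasurableSet Q := by
    rw [hQ]; exact measurableSet_Ico.prod measurableSet_Ico
  have hemb : MeasurableEmbedding (Subtype.val : Q → ℝ × ℝ) :=
    MeasurableEmbedding.subtype_coe hQm
  -- cells are measurable
  have hCm : ∀ k, MeasurableSet (C k) := by
    intro k; rw [hC k]; exact measurableSet_Ico.prod measurableSet_Ico
  -- cells are contained in Q
  have hCQ : ∀ k, C k ⊆ Q := by
    intro k x hx
    rw [hC k] at hx
    rw [hQ]
    obtain ⟨⟨h11, h12⟩, h21, h22⟩ := hx
    have hk1 : ((k.1 : ℕ) : ℝ) + 1 ≤ N := by exact_mod_cast k.1.isLt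
    have hk2 : ((k.2 : ℕ) : ℝ) + 1 ≤ N := by exact_mod_cast k.2.isLt
    constructor
    · constructor
      · exact le_trans (by positivity) h11
      · calc x.1 < ((k.1:ℝ)+1)/N := h12
          _ ≤ N / N := by gcongr
          _ = 1 := div_self hNpos.ne'
    · constructor
      · exact le_trans (by positivity) h21
      · calc x.2 < ((k.2:ℝ)+1)/N := h22
          _ ≤ N / N := by gcongr
          _ = 1 := div_self hNpos.ne'
  -- cells cover Q
  have hcover : ∀ x ∈ Q, ∃ k, x ∈ C k := by
    intro x hx
    rw [hQ] at hx
    obtain ⟨i, hi⟩ := lax_aux_cover hN hx.1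
    obtain ⟨j, hj⟩ := lax_aux_cover hN hx.2
    exact ⟨(i, j), by rw [hC]; exact ⟨hi, hj⟩⟩
  -- cells are pairwise disjoint
  have hdisj : ∀ k l, k ≠ l → Disjoint (C k) (C l) := by
    intro k l hkl
    rw [Set.disjoint_left]
    intro x hxk hxl
    rw [hC k] at hxk; rw [hC l] at hxl
    apply hkl
    have e1 : (k.1 : ℕ) = (l.1 : ℕ) :=
      lax_aux_unique hNpos hxk.1.1 hxk.1.2 hxl.1.1 hxl.1.2
    have e2 : (k.2 : ℕ) = (l.2 : ℕ) :=
      lax_aux_unique hNpos hxk.2.1 hxk.2.2 hxl.2.1 hxl.2.2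
    exact Prod.ext (Fin.ext e1) (Fin.ext e2)
  -- each cell has volume c = 1/N²
  set c : ENNReal := ENNReal.ofReal (1/N) * ENNReal.ofReal (1/N) with hc
  have hsub : ∀ a : ℝ, (a + 1)/(N:ℝ) - a/(N:ℝ) = 1/(N:ℝ) := by intro a; ring
  have hvol : ∀ k, volume (C k) = c := by
    intro k
    rw [hC k, Measure.volume_eq_prod, Measure.prod_prod, Real.volume_Ico,
      Real.volume_Ico, hsub, hsub]
  -- cells viewed inside Q
  set K : Fin N × Fin N → Set Q := fun k => Subtype.val ⁻¹' C k with hK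
  have hKm : ∀ k, MeasurableSet (K k) := fun k => hemb.measurable (hCm k)
  have hμK : ∀ k, μ (K k) = c := by
    intro k
    rw [hμ, hemb.comap_apply, hK]
    simp only [Set.image_preimage_eq_inter_range, Subtype.range_coe]
    rw [Set.inter_eq_self_of_subset_left (hCQ k)]
    exact hvol k
  -- the bipartite relation and Hall's condition
  set t : Fin N × Fin N → Finset (Fin N × Fin N) := fun k =>
    Finset.univ.filter (fun l => ∃ x : Q, (x : ℝ × ℝ) ∈ C k ∧
      ((φ x : Q) : ℝ × ℝ) ∈ C l) with ht
  have hμunion : ∀ s : Finset (Fin N × Fin N),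
      μ (⋃ k ∈ s, K k) = s.card * c := by
    intro s
    rw [measure_biUnion_finset ?_ (fun k _ => hKm k)]
    · simp [hμK, Finset.sum_const, nsmul_eq_mul]
    · intro k hk l hl hkl
      exact (hdisj k l hkl).preimage (Subtype.val : Q → ℝ × ℝ)
  have hhall : ∀ s : Finset (Fin N × Fin N), s.card ≤ (s.biUnion t).card := by
    intro s
    set A : Set Q := ⋃ k ∈ s, K k with hA
    have hAm : MeasurableSet A := MeasurableSet.biUnion s.countable_toSet (fun k _ => hKm k)
    set B : Set Q := ⇑φ.symm ⁻¹' A with hB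
    have hBm : MeasurableSet B := hφinv hAm
    have hBA : μ B = μ A := by
      have := hpres B hBm
      rw [← this]
      congr 1
      ext y
      simp [hB]
    have hBsub : B ⊆ ⋃ l ∈ s.biUnion t, K l := by
      intro y hy
      rw [hB, Set.mem_preimage, hA, Set.mem_iUnion₂] at hy
      obtain ⟨k, hk, hyk⟩ := hy
      obtain ⟨l, hl⟩ := hcover (y : ℝ × ℝ) y.2
      refine Set.mem_biUnion (Finset.mem_biUnion.mpr ⟨k, hk, ?_⟩) hl
      rw [ht]
      refine Finset.mem_filter.mpr ⟨Finset.mem_univ _, ⟨φ.symm y, hyk, ?_⟩⟩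
      rw [Equiv.apply_symm_apply]
      exact hl
    have key : (s.card : ENNReal) * c ≤ ((s.biUnion t).card : ENNReal) * c := by
      calc (s.card : ENNReal) * c = μ A := (hμunion s).symm
        _ = μ B := hBA.symm
        _ ≤ μ (⋃ l ∈ s.biUnion t, K l) := measure_mono hBsub
        _ = (s.biUnion t).card * c := hμunion _
    have hc0 : c ≠ 0 := by
      rw [hc]
      simp only [ne_eq, mul_eq_zero, ENNReal.ofReal_eq_zero, not_or, not_le]
      constructor <;> positivity
    have hctop : c ≠ ⊤ := by
      rw [hc]; exact ENNReal.mul_ne_top ENNReal.ofReal_ne_top ENNReal.ofReal_ne_top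
    have := (ENNReal.mul_le_mul_iff_left hc0 hctop).mp key
    exact_mod_cast this
  obtain ⟨f, hfinj, hf⟩ :=
    (Finset.all_card_le_biUnion_card_iff_existsInjective' t).mp hhall
  refine ⟨Equiv.ofBijective f ((Finite.injective_iff_bijective).mp hfinj), fun k => ?_⟩
  have := hf k
  rw [ht] at this
  simpa using (Finset.mem_filter.mp this).2
end

section
/- For any three points a, b, c ∈ ℝ², the two-dimensional Lebesgue measure of the triangle convexHull ℝ {a, b, c} equals |(b − a) × (c − a)| / 2, where u × v = u₁v₂ − u₂v₁ is the cross product of u, v ∈ ℝ². -/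
open MeasureTheory Set Pointwise

/-!
Translating by `-a` and applying the linear map that sends `(1, 0)` and `(0, 1)` to `b - a` and
`c - a` carries the unit triangle `{x, y ≥ 0, x + y ≤ 1}` onto the given one. The unit triangle
has area `1/2` by Fubini, translations preserve Lebesgue measure, and a linear map scales it by
the absolute value of its determinant, which here is the cross product `(b - a) × (c - a)`.
-/

theorem volume_region_between_cc_eq_regionBetween {α : Type*} [MeasurableSpace α]
    {μ : Measure α} [SFinite μ] {f g : α → ℝ} {s : Set α}
    (hf : Measurable f) (hg : Measurable g) (hs : MeasurableSet s) :
    μ.prod volume {p : α × ℝ | p.1 ∈ s ∧ p.2 ∈ Icc (f p.1) (g p.1)} =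
      μ.prod volume (regionBetween f g s) := by
  rw [Measure.prod_apply (measurableSet_region_between_cc hf hg hs),
    Measure.prod_apply (measurableSet_regionBetween hf hg hs)]
  congr 1 with x
  by_cases hx : x ∈ s <;>
    simp only [regionBetween, preimage, mem_ofPred_eq, hx, true_and, false_and, ofPred_mem_eq,
      ofPred_false, Real.volume_Icc, Real.volume_Ioo]

theorem convexHull_zero_unitVectors :
    convexHull ℝ {0, (1, 0), (0, 1)} =
      {p : ℝ × ℝ | p.1 ∈ Icc 0 1 ∧ p.2 ∈ Icc 0 (1 - p.1)} := by
  refine (convexHull_min ?_ ?_).antisymm ?_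
  · rintro p (rfl | rfl | rfl) <;> norm_num
  · rintro ⟨x₁, x₂⟩ ⟨⟨hx₁, -⟩, hx₂, hx⟩ ⟨y₁, y₂⟩ ⟨⟨hy₁, -⟩, hy₂, hy⟩ s t hs ht hst
    simp only [mem_ofPred_eq, Prod.smul_mk, Prod.mk_add_mk, smul_eq_mul, mem_Icc]
    refine ⟨⟨by positivity, by nlinarith⟩, by positivity, by nlinarith⟩
  · rintro ⟨x, y⟩ ⟨⟨hx, -⟩, hy, hxy⟩
    have hconv := (convex_convexHull ℝ {0, ((1 : ℝ), (0 : ℝ)), (0, 1)}).sum_mem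
      (t := Finset.univ) (w := ![1 - x - y, x, y]) (z := ![0, (1, 0), (0, 1)])
      (by simp only at hxy; intro i _; fin_cases i <;> simp <;> linarith)
      (by simp [Fin.sum_univ_three]; ring)
      (fun i _ ↦ subset_convexHull ℝ _ (by fin_cases i <;> simp))
    simpa [Fin.sum_univ_three] using hconv

theorem volume_convexHull_zero_unitVectors :
    volume (convexHull ℝ {0, ((1 : ℝ), (0 : ℝ)), (0, 1)}) = ENNReal.ofReal (1 / 2) := by
  have hcont : Continuous fun x : ℝ ↦ 1 - x := by fun_prop
  rw [convexHull_zero_unitVectors, Measure.volume_eq_prod,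
    volume_region_between_cc_eq_regionBetween measurable_const hcont.measurable measurableSet_Icc,
    volume_regionBetween_eq_integral (integrableOn_const (by simp)) hcont.integrableOn_Icc
      measurableSet_Icc (fun x hx ↦ by linarith [hx.2]),
    integral_Icc_eq_integral_Ioc, ← intervalIntegral.integral_of_le zero_le_one]
  simp only [Pi.sub_apply, sub_zero]
  rw [intervalIntegral.integral_sub intervalIntegrable_const
    intervalIntegral.intervalIntegrable_id, integral_id]
  norm_num

theorem volume_convexHull_insert_zero_pair (u v : ℝ × ℝ) :
    volume (convexHull ℝ {0, u, v}) = ENNReal.ofReal (|u.1 * v.2 - u.2 * v.1| / 2) := by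
  set L := Matrix.toLin (Module.Basis.finTwoProd ℝ) (Module.Basis.finTwoProd ℝ)
    !![u.1, v.1; u.2, v.2]
  have hvertices : L '' {0, (1, 0), (0, 1)} = {0, u, v} := by
    simp [L, image_insert_eq, Matrix.toLin_finTwoProd_apply, Prod.mk_zero_zero]
  rw [← hvertices, ← L.image_convexHull, Measure.addHaar_image_linearMap, LinearMap.det_toLin,
    Matrix.det_fin_two_of, volume_convexHull_zero_unitVectors,
    ← ENNReal.ofReal_mul (abs_nonneg _)]
  ring_nf

/-- The shoelace formula for a triangle: the Lebesgue measure of the triangle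
with vertices `a, b, c ∈ ℝ²` is `|(b−a) × (c−a)|/2`, where
`u × v = u₁v₂ − u₂v₁`. -/
theorem triangle_area_cross_product (a b c : ℝ × ℝ) :
    volume (convexHull ℝ {a, b, c}) =
      ENNReal.ofReal
        (|(b - a).1 * (c - a).2 - (b - a).2 * (c - a).1| / 2) := by
  have htranslate :
      ({a, b, c} : Set (ℝ × ℝ)) = a +ᵥ ({0, b - a, c - a} : Set (ℝ × ℝ)) := by
    simp [vadd_set_insert]
  rw [htranslate, convexHull_vadd, measure_vadd, volume_convexHull_insert_zero_pair]
end

section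
/- Let ω : ℝ² → ℝ be C¹ and let c ∈ ℝ. Assume there exists c' < c such that the superlevel set {x : ω(x) ≥ c'} is compact, and assume c is a regular value: the gradient ∇ω(x) ≠ 0 for every x with ω(x) = c. Then the area function A(t) = (Lebesgue measure of {x ∈ ℝ² : ω(x) ≥ t}), regarded as a real-valued function of t, is differentiable at t = c. -/
/-! Near a regular point `p`, `x ↦ (ℓ x, ω x)` is a C¹ chart for a suitable linear form `ℓ`. In
such a chart a change of variables followed by Fubini shows that the pushforward along `ω` of
`ρ dx`, for a continuous bump `ρ` supported in the chart, has a continuous density. A partition of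
unity over the compact set `ω⁻¹ [c - δ, c + δ]`, which is covered by such charts for small `δ`,
glues these into a continuous `F` with `vol (ω⁻¹ I) = ∫_I F` for `I ⊆ [c - δ, c + δ]`. Hence
`A t = A (c + δ) + ∫_t^{c+δ} F` near `c`, and `A' c = - F c`. -/

open MeasureTheory Set Topology Function
open scoped ENNReal

theorem OpenPartialHomeomorph.continuous_indicator_target_comp_symm {X Y M : Type*}
    [TopologicalSpace X] [TopologicalSpace Y] [T2Space Y] [TopologicalSpace M] [Zero M]
    (e : OpenPartialHomeomorph X Y) {g : X → M} (hg : ContinuousOn g e.source)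
    (hgs : HasCompactSupport g) (hge : tsupport g ⊆ e.source) :
    Continuous (e.target.indicator (g ∘ e.symm)) ∧
      HasCompactSupport (e.target.indicator (g ∘ e.symm)) := by
  have hK : IsCompact (e '' tsupport g) := hgs.image_of_continuousOn (e.continuousOn.mono hge)
  have hsupp : tsupport (e.target.indicator (g ∘ e.symm)) ⊆ e '' tsupport g := by
    refine closure_minimal (fun y hy => ?_) hK.isClosed
    rw [support_indicator] at hy
    exact ⟨e.symm y, subset_tsupport g hy.2, e.right_inv hy.1⟩
  refine ⟨ContinuousOn.continuous_of_tsupport_subset ?_ e.open_target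
    (hsupp.trans (fun y ⟨x, hx, hxy⟩ => hxy ▸ e.map_source (hge hx))), hK.of_isClosed_subset
    (isClosed_tsupport _) hsupp⟩
  exact (hg.comp e.continuousOn_symm e.mapsTo_symm).congr fun y hy => indicator_of_mem hy _

theorem OpenPartialHomeomorph.setIntegral_eq_setIntegral_target_inter {E F : Type*}
    [NormedAddCommGroup E] [NormedSpace ℝ E] [FiniteDimensional ℝ E] [MeasurableSpace E]
    [BorelSpace E] (μ : Measure E) [μ.IsAddHaarMeasure] [NormedAddCommGroup F] [NormedSpace ℝ F]
    (e : OpenPartialHomeomorph E E) {e' : E → E →L[ℝ] E}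
    (he' : ∀ x ∈ e.source, HasFDerivAt e (e' x) x) (hdet : ∀ x ∈ e.source, (e' x).det ≠ 0)
    {ρ : E → F} (hρ : support ρ ⊆ e.source) {s : Set E} (hs : MeasurableSet s) :
    ∫ x in s, ρ x ∂μ =
      ∫ y in e.target ∩ e.symm ⁻¹' s, |(e' (e.symm y)).det|⁻¹ • ρ (e.symm y) ∂μ := by
  have hmeas : MeasurableSet (e.source ∩ s) := e.open_source.measurableSet.inter hs
  rw [← e.image_source_inter_eq', integral_image_eq_integral_abs_det_fderiv_smul μ hmeas
      (fun x hx => (he' x hx.1).hasFDerivWithinAt) (e.injOn.mono inter_subset_left),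
    setIntegral_eq_of_subset_of_forall_sdiff_eq_zero hs inter_subset_right
      (fun x hx => notMem_support.1 fun h => hx.2 ⟨hρ h, hx.1⟩)]
  refine setIntegral_congr_fun hmeas fun x hx => ?_
  simp only [e.left_inv hx.1, smul_smul]
  rw [mul_inv_cancel₀ (abs_ne_zero.2 (hdet x hx.1)), one_smul]

theorem setIntegral_preimage_snd {α β E : Type*} [MeasurableSpace α] [MeasurableSpace β]
    [NormedAddCommGroup E] [NormedSpace ℝ E] {μ : Measure α} {ν : Measure β} [SFinite μ]
    [SFinite ν] {r : α × β → E} (hr : Integrable r (μ.prod ν)) (I : Set β) :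
    ∫ y in Prod.snd ⁻¹' I, r y ∂μ.prod ν = ∫ v in I, ∫ u, r (u, v) ∂μ ∂ν := by
  have hrI := hr.restrict (s := univ ×ˢ I)
  rw [← Measure.prod_restrict, Measure.restrict_univ] at hrI
  rw [← univ_prod, ← Measure.prod_restrict, Measure.restrict_univ, integral_prod_symm _ hrI]

theorem HasCompactSupport.continuous_integral_fst {α β E : Type*} [TopologicalSpace α]
    [MeasurableSpace α] [OpensMeasurableSpace α] [TopologicalSpace β]
    [FirstCountableTopology β] [LocallyCompactSpace β] [NormedAddCommGroup E] [NormedSpace ℝ E]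
    [SecondCountableTopologyEither α E] {μ : Measure α} [IsLocallyFiniteMeasure μ]
    {r : α × β → E} (hr : Continuous r) (hrs : HasCompactSupport r) :
    Continuous fun v => ∫ u, r (u, v) ∂μ := by
  have hK : IsCompact (Prod.fst '' tsupport r) := hrs.image continuous_fst
  refine (continuous_parametric_integral_of_continuous (f := fun (v : β) (u : α) => r (u, v))
    (μ := μ) (hr.comp continuous_swap) hK).congr fun v => ?_
  exact setIntegral_eq_integral_of_forall_compl_eq_zero fun u hu =>
    image_eq_zero_of_notMem_tsupport fun h => hu ⟨(u, v), h, rfl⟩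

theorem ContinuousLinearMap.det_prod_fin_two (ℓ D : ℝ × ℝ →L[ℝ] ℝ) :
    (ℓ.prod D).det = ℓ (1, 0) * D (0, 1) - ℓ (0, 1) * D (1, 0) := by
  rw [ContinuousLinearMap.det, ← LinearMap.det_toMatrix (Module.Basis.finTwoProd ℝ),
    Matrix.det_fin_two]
  simp [LinearMap.toMatrix_apply, Module.Basis.finTwoProd_zero, Module.Basis.finTwoProd_one]

theorem ContinuousLinearMap.exists_det_prod_ne_zero {D : ℝ × ℝ →L[ℝ] ℝ} (hD : D ≠ 0) :
    ∃ ℓ : ℝ × ℝ →L[ℝ] ℝ, (ℓ.prod D).det ≠ 0 := by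
  -- `ℓ` is `D` rotated by a quarter turn, so the determinant is `D (1, 0) ^ 2 + D (0, 1) ^ 2`.
  refine ⟨D (0, 1) • ContinuousLinearMap.fst ℝ ℝ ℝ - D (1, 0) • ContinuousLinearMap.snd ℝ ℝ ℝ, ?_⟩
  rw [det_prod_fin_two]
  contrapose! hD
  obtain ⟨h01, h10⟩ := mul_self_add_mul_self_eq_zero.1 (by simpa using hD)
  ext <;> simp [h10, h01]

section PushforwardDensity

variable {X : Type*} [MeasurableSpace X]

def HasContinuousPushforwardDensity (μ : Measure X) (ω : X → ℝ) (ρ : X → ℝ) : Prop :=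
  ∃ f : ℝ → ℝ, Continuous f ∧ Integrable f ∧
    ∀ I : Set ℝ, MeasurableSet I → ∫ x in ω ⁻¹' I, ρ x ∂μ = ∫ v in I, f v

theorem hasContinuousPushforwardDensity_sum {μ : Measure X} {ω : X → ℝ} {ι : Type*} [Fintype ι]
    {ρ : ι → X → ℝ} (hρ : ∀ i, Integrable (ρ i) μ)
    (h : ∀ i, HasContinuousPushforwardDensity μ ω (ρ i)) :
    HasContinuousPushforwardDensity μ ω (∑ i, ρ i) := by
  choose f hfc hfi hf using h
  refine ⟨fun v => ∑ i, f i v, continuous_finsetSum _ fun i _ => hfc i,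
    integrable_finsetSum _ fun i _ => hfi i, fun I hI => ?_⟩
  simp only [Finset.sum_apply]
  rw [integral_finsetSum _ fun i _ => (hρ i).integrableOn,
    integral_finsetSum _ fun i _ => (hfi i).integrableOn]
  exact Finset.sum_congr rfl fun i _ => hf i I hI

end PushforwardDensity

theorem OpenPartialHomeomorph.hasContinuousPushforwardDensity_of_snd_eq
    (e : OpenPartialHomeomorph (ℝ × ℝ) (ℝ × ℝ)) {e' : ℝ × ℝ → ℝ × ℝ →L[ℝ] ℝ × ℝ}
    (he' : ∀ x ∈ e.source, HasFDerivAt e (e' x) x) (he'c : ContinuousOn e' e.source)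
    (hdet : ∀ x ∈ e.source, (e' x).det ≠ 0) {ω : ℝ × ℝ → ℝ} (hωm : Measurable ω)
    (hω : ∀ x ∈ e.source, (e x).2 = ω x) {ρ : ℝ × ℝ → ℝ} (hρ : Continuous ρ)
    (hρs : HasCompactSupport ρ) (hρe : tsupport ρ ⊆ e.source) :
    HasContinuousPushforwardDensity volume ω ρ := by
  set q : ℝ × ℝ → ℝ := fun x => |(e' x).det|⁻¹ • ρ x
  have hq : ContinuousOn q e.source :=
    ((ContinuousLinearMap.continuous_det.comp_continuousOn he'c).abs.inv₀
      fun x hx => abs_ne_zero.2 (hdet x hx)).smul hρ.continuousOn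
  have hqρ : support q ⊆ support ρ := support_smul_subset_right (fun x => |(e' x).det|⁻¹) ρ
  obtain ⟨hr, hrs⟩ := e.continuous_indicator_target_comp_symm hq (hρs.mono hqρ)
    ((closure_mono hqρ).trans hρe)
  have hri : Integrable (e.target.indicator (q ∘ e.symm)) (volume.prod volume) := by
    rw [← Measure.volume_eq_prod]; exact hr.integrable_of_hasCompactSupport hrs
  refine ⟨_, hrs.continuous_integral_fst hr, hri.integral_prod_right, fun I hI => ?_⟩
  have hω_symm : ∀ y ∈ e.target, ω (e.symm y) = y.2 := fun y hy => by
    rw [← hω _ (e.map_target hy), e.right_inv hy]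
  have hpre : e.target ∩ e.symm ⁻¹' (ω ⁻¹' I) = Prod.snd ⁻¹' I ∩ e.target := by
    ext y
    by_cases hy : y ∈ e.target <;> simp [hy, hω_symm y]
  rw [e.setIntegral_eq_setIntegral_target_inter volume he' hdet
      ((subset_tsupport ρ).trans hρe) (hωm hI), hpre,
    ← setIntegral_indicator e.open_target.measurableSet, Measure.volume_eq_prod]
  exact setIntegral_preimage_snd hri I

theorem exists_isOpen_forall_hasContinuousPushforwardDensity {ω : ℝ × ℝ → ℝ}
    (hω : ContDiff ℝ 1 ω) {p : ℝ × ℝ} (hp : fderiv ℝ ω p ≠ 0) :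
    ∃ V : Set (ℝ × ℝ), IsOpen V ∧ p ∈ V ∧ ∀ ρ : ℝ × ℝ → ℝ, Continuous ρ → HasCompactSupport ρ →
      tsupport ρ ⊆ V → HasContinuousPushforwardDensity volume ω ρ := by
  obtain ⟨ℓ, hℓ⟩ := ContinuousLinearMap.exists_det_prod_ne_zero hp
  set G : ℝ × ℝ → ℝ × ℝ := fun x => (ℓ x, ω x)
  have hG : ContDiff ℝ 1 G := ℓ.contDiff.prodMk hω
  have hGp : (fderiv ℝ G p).det ≠ 0 := by
    rwa [(ℓ.hasFDerivAt.prodMk (hω.differentiable one_ne_zero p).hasFDerivAt).fderiv]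
  have hU : IsOpen {x | (fderiv ℝ G x).det ≠ 0} :=
    isOpen_ne_fun (ContinuousLinearMap.continuous_det.comp (hG.continuous_fderiv one_ne_zero))
      continuous_const
  have hGs : HasStrictFDerivAt G
      ((fderiv ℝ G p).toContinuousLinearEquivOfDetNeZero hGp : ℝ × ℝ →L[ℝ] ℝ × ℝ) p := by
    rw [ContinuousLinearMap.coe_toContinuousLinearEquivOfDetNeZero]
    exact hG.contDiffAt.hasStrictFDerivAt one_ne_zero
  set e := (hGs.toOpenPartialHomeomorph G).restrOpen _ hU
  refine ⟨e.source, e.open_source, ⟨hGs.mem_toOpenPartialHomeomorph_source, hGp⟩,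
    fun ρ hρ hρs hρe => e.hasContinuousPushforwardDensity_of_snd_eq (e' := fderiv ℝ G)
      (fun x _ => (hG.differentiable one_ne_zero x).hasFDerivAt)
      (hG.continuous_fderiv one_ne_zero).continuousOn (fun x hx => hx.2)
      hω.continuous.measurable (fun x _ => rfl) hρ hρs hρe⟩

theorem exists_preimage_Icc_subset_of_isCompact {X : Type*} [TopologicalSpace X] {ω : X → ℝ}
    (hω : Continuous ω) {c' c : ℝ} (hc : c' < c) (hK : IsCompact {x | c' ≤ ω x}) {O : Set X}
    (hO : IsOpen O) (hcO : ω ⁻¹' {c} ⊆ O) :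
    ∃ δ > 0, c' < c - δ ∧ ω ⁻¹' Icc (c - δ) (c + δ) ⊆ O := by
  have hL : IsCompact (ω '' ({x | c' ≤ ω x} \ O)) := (hK.diff hO).image hω
  have hS : (ω '' ({x | c' ≤ ω x} \ O))ᶜ ∩ Ioi c' ∈ 𝓝 c :=
    Filter.inter_mem (hL.isClosed.isOpen_compl.mem_nhds fun ⟨x, hx, hxc⟩ => hx.2 (hcO hxc))
      (Ioi_mem_nhds hc)
  obtain ⟨δ, hδ, hball⟩ := Metric.nhds_basis_closedBall.mem_iff.1 hS
  refine ⟨δ, hδ, (hball (by simp [abs_of_pos hδ])).2, fun x hx => ?_⟩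
  rw [mem_preimage, ← Real.closedBall_eq_Icc] at hx
  obtain ⟨hxL, hxc'⟩ := hball hx
  by_contra hxO
  exact hxL ⟨x, ⟨(mem_Ioi.1 hxc').le, hxO⟩, rfl⟩

theorem exists_continuous_measureReal_preimage_eq_setIntegral {X : Type*} [TopologicalSpace X]
    [T2Space X] [LocallyCompactSpace X] [MeasurableSpace X] [OpensMeasurableSpace X] {μ : Measure X}
    [IsFiniteMeasureOnCompacts μ] {ω : X → ℝ} (hω : Measurable ω) {K : Set X} (hK : IsCompact K)
    {ι : Type*} {V : ι → Set X} (hV : ∀ i, IsOpen (V i)) (hKV : K ⊆ ⋃ i, V i)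
    (hdens : ∀ i ρ, Continuous ρ → HasCompactSupport ρ → tsupport ρ ⊆ V i →
      HasContinuousPushforwardDensity μ ω ρ) :
    ∃ F : ℝ → ℝ, Continuous F ∧
      ∀ I, MeasurableSet I → ω ⁻¹' I ⊆ K → μ.real (ω ⁻¹' I) = ∫ v in I, F v := by
  obtain ⟨t, ht⟩ := hK.elim_finite_subcover V hV hKV
  obtain ⟨ρ, hρV, hρ1, -, hρs⟩ := exists_continuous_sum_one_of_isOpen_isCompact
    (s := fun j : Fin t.card => V (t.equivFin.symm j)) (fun j => hV _) hK fun x hx => by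
      obtain ⟨i, hi, hxi⟩ := mem_iUnion₂.1 (ht hx)
      exact mem_iUnion.2 ⟨t.equivFin ⟨i, hi⟩, by simpa using hxi⟩
  obtain ⟨F, hF, -, hFI⟩ := hasContinuousPushforwardDensity_sum
    (fun j => (ρ j).continuous.integrable_of_hasCompactSupport (hρs j))
    (fun j => hdens _ _ (ρ j).continuous (hρs j) (hρV j))
  refine ⟨F, hF, fun I hI hIK => ?_⟩
  rw [← hFI I hI, setIntegral_congr_fun (hω hI) fun x hx => hρ1 (hIK hx)]
  simp

theorem hasDerivAt_measureReal_superlevel {X : Type*} [MeasurableSpace X] {μ : Measure X}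
    {ω : X → ℝ} (hω : Measurable ω) {F : ℝ → ℝ} (hF : Continuous F) {c δ : ℝ} (hδ : 0 < δ)
    (hfin : μ {x | c - δ ≤ ω x} ≠ ∞)
    (hdens : ∀ I, MeasurableSet I → I ⊆ Icc (c - δ) (c + δ) → μ.real (ω ⁻¹' I) = ∫ v in I, F v) :
    HasDerivAt (fun t => μ.real {x | t ≤ ω x}) (-F c) c := by
  have hsplit : ∀ t ∈ Icc (c - δ) (c + δ),
      μ.real {x | t ≤ ω x} = μ.real {x | c + δ ≤ ω x} - ∫ v in (c + δ)..t, F v := by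
    intro t ht
    calc μ.real {x | t ≤ ω x}
        = μ.real (ω ⁻¹' Ico t (c + δ) ∪ ω ⁻¹' Ici (c + δ)) := by
          rw [← preimage_union, Ico_union_Ici_eq_Ici ht.2]; rfl
      _ = μ.real (ω ⁻¹' Ico t (c + δ)) + μ.real {x | c + δ ≤ ω x} :=
          measureReal_union (((Iio_disjoint_Ici le_rfl).mono_left Ico_subset_Iio_self).preimage ω)
            (hω measurableSet_Ici)
            (measure_ne_top_of_subset (fun x hx => ht.1.trans hx.1) hfin)
            (measure_ne_top_of_subset (fun x hx => (by linarith : c - δ ≤ c + δ).trans hx) hfin)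
      _ = μ.real {x | c + δ ≤ ω x} - ∫ v in (c + δ)..t, F v := by
          rw [hdens _ measurableSet_Ico (Ico_subset_Icc_self.trans (Icc_subset_Icc ht.1 le_rfl)),
            intervalIntegral.integral_symm, intervalIntegral.integral_of_le ht.2,
            integral_Ioc_eq_integral_Ioo, integral_Ico_eq_integral_Ioo]
          ring
  refine ((hF.integral_hasStrictDerivAt (c + δ) c).hasDerivAt.const_sub
    (μ.real {x | c + δ ≤ ω x})).congr_of_eventuallyEq ?_
  filter_upwards [Icc_mem_nhds (by linarith : c - δ < c) (by linarith : c < c + δ)] with t ht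
  exact hsplit t ht

/-- Differentiability of the area function at a regular value: if `ω : ℝ² → ℝ`
is C¹, some superlevel set `{ω ≥ c'}` with `c' < c` is compact, and `∇ω ≠ 0`
on the level set `{ω = c}`, then `t ↦ vol {x | ω x ≥ t}` is differentiable at
`t = c`. -/
theorem area_function_differentiable_at_regular_value
    (ω : ℝ × ℝ → ℝ) (hω : ContDiff ℝ 1 ω) (c : ℝ)
    (hcompact : ∃ c' : ℝ, c' < c ∧ IsCompact {x : ℝ × ℝ | c' ≤ ω x})
    (hreg : ∀ x : ℝ × ℝ, ω x = c → fderiv ℝ ω x ≠ 0) :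
    DifferentiableAt ℝ (fun t : ℝ => (volume {x : ℝ × ℝ | t ≤ ω x}).toReal) c := by
  obtain ⟨c', hc', hK⟩ := hcompact
  choose V hV hpV hVdens using fun p : ω ⁻¹' {c} =>
    exists_isOpen_forall_hasContinuousPushforwardDensity hω (hreg p p.2)
  obtain ⟨δ, hδ, hc'δ, hδV⟩ := exists_preimage_Icc_subset_of_isCompact hω.continuous hc' hK
    (isOpen_iUnion hV) fun p hp => mem_iUnion.2 ⟨⟨p, hp⟩, hpV _⟩
  have hKδ : {x | c - δ ≤ ω x} ⊆ {x | c' ≤ ω x} := fun x hx => hc'δ.le.trans hx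
  obtain ⟨F, hF, hFdens⟩ :=
    exists_continuous_measureReal_preimage_eq_setIntegral hω.continuous.measurable
      (hK.of_isClosed_subset (isClosed_Icc.preimage hω.continuous) fun x hx => hKδ hx.1)
      hV hδV hVdens
  exact (hasDerivAt_measureReal_superlevel hω.continuous.measurable hF hδ
    (measure_ne_top_of_subset hKδ hK.measure_lt_top.ne)
    fun I hI hIδ => hFdens I hI (preimage_mono hIδ)).differentiableAt
end

section
/- Let M ≥ 3, h > 0, and let a, b : (ZMod M) × (ZMod M) → ℝ be grid functions on a doubly periodic grid. Define the Arakawa Jacobian J_A(a,b) = (J₁ + J₂ + J₃)/3, where for each (i,j): J₁(i,j) = [(a(i+1,j) − a(i−1,j))(b(i,j+1) − b(i,j−1)) − (a(i,j+1) − a(i,j−1))(b(i+1,j) − b(i−1,j))]/(4h²); J₂(i,j) = [a(i+1,j)(b(i+1,j+1) − b(i+1,j−1)) − a(i−1,j)(b(i−1,j+1) − b(i−1,j−1)) − a(i,j+1)(b(i+1,j+1) − b(i−1,j+1)) + a(i,j−1)(b(i+1,j−1) − b(i−1,j−1))]/(4h²); J₃(i,j) = [a(i+1,j+1)(b(i,j+1)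 − b(i+1,j)) − a(i−1,j−1)(b(i−1,j) − b(i,j−1)) − a(i−1,j+1)(b(i,j+1) − b(i−1,j)) + a(i+1,j−1)(b(i+1,j) − b(i,j−1))]/(4h²). Then Σ_{(i,j)} a(i,j)·J_A(a,b)(i,j) = 0 and Σ_{(i,j)} b(i,j)·J_A(a,b)(i,j) = 0. -/
section ArakawaAux

/-- Sums over the doubly periodic grid are translation invariant. -/
lemma sum_shift {M : ℕ} [NeZero M] (f : ZMod M × ZMod M → ℝ) (c : ZMod M × ZMod M) :
    ∑ p : ZMod M × ZMod M, f (p + c) = ∑ p : ZMod M × ZMod M, f p :=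
  Fintype.sum_equiv (Equiv.addRight c) _ _ (fun _ => rfl)

/-- The basic trilinear grid sum `Σ a(p) a(p+u) b(p+v)`. -/
noncomputable def Tsum {M : ℕ} [NeZero M] (a b : ZMod M × ZMod M → ℝ)
    (u v : ZMod M × ZMod M) : ℝ :=
  ∑ p : ZMod M × ZMod M, a p * a (p + u) * b (p + v)

/-- Shifting/swapping identity for the trilinear grid sum. -/
lemma Tsum_shift {M : ℕ} [NeZero M] (a b : ZMod M × ZMod M → ℝ)
    (u v u' v' : ZMod M × ZMod M) (hu : u' = -u) (hv : v' = v - u) :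
    Tsum a b u v = Tsum a b u' v' := by
  subst hu hv
  unfold Tsum
  rw [← sum_shift (fun q => a q * a (q + u) * b (q + v)) (-u)]
  refine Finset.sum_congr rfl fun p _ => ?_
  have e1 : p + -u + u = p := by abel
  have e2 : p + -u + v = p + (v - u) := by abel
  simp only [e1, e2]
  ring

/-- The numerator of `12 h² · J_A(a,b)`. -/
noncomputable def bigNum {M : ℕ} (a b : ZMod M × ZMod M → ℝ) :
    ZMod M × ZMod M → ℝ := fun p =>
  ((a (p.1 + 1, p.2) - a (p.1 - 1, p.2)) * (b (p.1, p.2 + 1) - b (p.1, p.2 - 1))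
     - (a (p.1, p.2 + 1) - a (p.1, p.2 - 1)) * (b (p.1 + 1, p.2) - b (p.1 - 1, p.2)))
  + (a (p.1 + 1, p.2) * (b (p.1 + 1, p.2 + 1) - b (p.1 + 1, p.2 - 1))
     - a (p.1 - 1, p.2) * (b (p.1 - 1, p.2 + 1) - b (p.1 - 1, p.2 - 1))
     - a (p.1, p.2 + 1) * (b (p.1 + 1, p.2 + 1) - b (p.1 - 1, p.2 + 1))
     + a (p.1, p.2 - 1) * (b (p.1 + 1, p.2 - 1) - b (p.1 - 1, p.2 - 1)))
  + (a (p.1 + 1, p.2 + 1) * (b (p.1, p.2 + 1) - b (p.1 + 1, p.2))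
     - a (p.1 - 1, p.2 - 1) * (b (p.1 - 1, p.2) - b (p.1, p.2 - 1))
     - a (p.1 - 1, p.2 + 1) * (b (p.1, p.2 + 1) - b (p.1 - 1, p.2))
     + a (p.1 + 1, p.2 - 1) * (b (p.1 + 1, p.2) - b (p.1, p.2 - 1)))

/-- `Σ a · bigNum` expressed through the trilinear sums. -/
lemma sum_a_bigNum {M : ℕ} [NeZero M] (a b : ZMod M × ZMod M → ℝ) :
    ∑ p : ZMod M × ZMod M, a p * bigNum a b p
      = Tsum a b (1,0) (0,1) - Tsum a b (1,0) (0,-1) - Tsum a b (-1,0) (0,1)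
        + Tsum a b (-1,0) (0,-1)
        - Tsum a b (0,1) (1,0) + Tsum a b (0,1) (-1,0) + Tsum a b (0,-1) (1,0)
        - Tsum a b (0,-1) (-1,0)
        + Tsum a b (1,0) (1,1) - Tsum a b (1,0) (1,-1) - Tsum a b (-1,0) (-1,1)
        + Tsum a b (-1,0) (-1,-1)
        - Tsum a b (0,1) (1,1) + Tsum a b (0,1) (-1,1) + Tsum a b (0,-1) (1,-1)
        - Tsum a b (0,-1) (-1,-1)
        + Tsum a b (1,1) (0,1) - Tsum a b (1,1) (1,0) - Tsum a b (-1,-1) (-1,0)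
        + Tsum a b (-1,-1) (0,-1)
        - Tsum a b (-1,1) (0,1) + Tsum a b (-1,1) (-1,0) + Tsum a b (1,-1) (1,0)
        - Tsum a b (1,-1) (0,-1) := by
  unfold Tsum
  simp only [← Finset.sum_add_distrib, ← Finset.sum_sub_distrib]
  refine Finset.sum_congr rfl fun p _ => ?_
  obtain ⟨i, j⟩ := p
  simp only [bigNum, Prod.mk_add_mk, add_zero, zero_add, sub_eq_add_neg]
  ring

/-- Enstrophy-type cancellation: `Σ a · bigNum a b = 0`. -/
lemma sum_a_bigNum_eq_zero {M : ℕ} [NeZero M] (a b : ZMod M × ZMod M → ℝ) :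
    ∑ p : ZMod M × ZMod M, a p * bigNum a b p = 0 := by
  rw [sum_a_bigNum a b,
      Tsum_shift a b (1,0) (0,1) (-1,0) (-1,1) (by simp [Prod.ext_iff]) (by simp [Prod.ext_iff]),
      Tsum_shift a b (-1,0) (0,-1) (1,0) (1,-1) (by simp [Prod.ext_iff]) (by simp [Prod.ext_iff]),
      Tsum_shift a b (0,1) (-1,0) (0,-1) (-1,-1) (by simp [Prod.ext_iff]) (by simp [Prod.ext_iff]),
      Tsum_shift a b (0,-1) (1,0) (0,1) (1,1) (by simp [Prod.ext_iff]) (by simp [Prod.ext_iff]),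
      Tsum_shift a b (1,0) (1,1) (-1,0) (0,1) (by simp [Prod.ext_iff]) (by simp [Prod.ext_iff]),
      Tsum_shift a b (-1,0) (-1,-1) (1,0) (0,-1) (by simp [Prod.ext_iff]) (by simp [Prod.ext_iff]),
      Tsum_shift a b (0,1) (-1,1) (0,-1) (-1,0) (by simp [Prod.ext_iff]) (by simp [Prod.ext_iff]),
      Tsum_shift a b (0,-1) (1,-1) (0,1) (1,0) (by simp [Prod.ext_iff]) (by simp [Prod.ext_iff]),
      Tsum_shift a b (1,1) (0,1) (-1,-1) (-1,0) (by simp [Prod.ext_iff]) (by simp [Prod.ext_iff]),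
      Tsum_shift a b (-1,-1) (0,-1) (1,1) (1,0) (by simp [Prod.ext_iff]) (by simp [Prod.ext_iff]),
      Tsum_shift a b (-1,1) (0,1) (1,-1) (1,0) (by simp [Prod.ext_iff]) (by simp [Prod.ext_iff]),
      Tsum_shift a b (-1,1) (-1,0) (1,-1) (0,-1) (by simp [Prod.ext_iff]) (by simp [Prod.ext_iff])]
  ring

/-- `Σ b · bigNum` expressed through the trilinear sums (with roles of `a,b` swapped). -/
lemma sum_b_bigNum {M : ℕ} [NeZero M] (a b : ZMod M × ZMod M → ℝ) :
    ∑ p : ZMod M × ZMod M, b p * bigNum a b p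
      = Tsum b a (0,1) (1,0) - Tsum b a (0,-1) (1,0) - Tsum b a (0,1) (-1,0)
        + Tsum b a (0,-1) (-1,0)
        - Tsum b a (1,0) (0,1) + Tsum b a (-1,0) (0,1) + Tsum b a (1,0) (0,-1)
        - Tsum b a (-1,0) (0,-1)
        + Tsum b a (1,1) (1,0) - Tsum b a (1,-1) (1,0) - Tsum b a (-1,1) (-1,0)
        + Tsum b a (-1,-1) (-1,0)
        - Tsum b a (1,1) (0,1) + Tsum b a (-1,1) (0,1) + Tsum b a (1,-1) (0,-1)
        - Tsum b a (-1,-1) (0,-1)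
        + Tsum b a (0,1) (1,1) - Tsum b a (1,0) (1,1) - Tsum b a (-1,0) (-1,-1)
        + Tsum b a (0,-1) (-1,-1)
        - Tsum b a (0,1) (-1,1) + Tsum b a (-1,0) (-1,1) + Tsum b a (1,0) (1,-1)
        - Tsum b a (0,-1) (1,-1) := by
  unfold Tsum
  simp only [← Finset.sum_add_distrib, ← Finset.sum_sub_distrib]
  refine Finset.sum_congr rfl fun p _ => ?_
  obtain ⟨i, j⟩ := p
  simp only [bigNum, Prod.mk_add_mk, add_zero, zero_add, sub_eq_add_neg]
  ring

/-- Energy-type cancellation: `Σ b · bigNum a b = 0`. -/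
lemma sum_b_bigNum_eq_zero {M : ℕ} [NeZero M] (a b : ZMod M × ZMod M → ℝ) :
    ∑ p : ZMod M × ZMod M, b p * bigNum a b p = 0 := by
  rw [sum_b_bigNum a b,
      Tsum_shift b a (0,1) (1,1) (0,-1) (1,0) (by simp [Prod.ext_iff]) (by simp [Prod.ext_iff]),
      Tsum_shift b a (1,0) (1,1) (-1,0) (0,1) (by simp [Prod.ext_iff]) (by simp [Prod.ext_iff]),
      Tsum_shift b a (-1,0) (-1,-1) (1,0) (0,-1) (by simp [Prod.ext_iff]) (by simp [Prod.ext_iff]),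
      Tsum_shift b a (0,-1) (-1,-1) (0,1) (-1,0) (by simp [Prod.ext_iff]) (by simp [Prod.ext_iff]),
      Tsum_shift b a (0,1) (-1,1) (0,-1) (-1,0) (by simp [Prod.ext_iff]) (by simp [Prod.ext_iff]),
      Tsum_shift b a (-1,0) (-1,1) (1,0) (0,1) (by simp [Prod.ext_iff]) (by simp [Prod.ext_iff]),
      Tsum_shift b a (1,0) (1,-1) (-1,0) (0,-1) (by simp [Prod.ext_iff]) (by simp [Prod.ext_iff]),
      Tsum_shift b a (0,-1) (1,-1) (0,1) (1,0) (by simp [Prod.ext_iff]) (by simp [Prod.ext_iff]),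
      Tsum_shift b a (1,1) (1,0) (-1,-1) (0,-1) (by simp [Prod.ext_iff]) (by simp [Prod.ext_iff]),
      Tsum_shift b a (1,-1) (0,-1) (-1,1) (-1,0) (by simp [Prod.ext_iff]) (by simp [Prod.ext_iff]),
      Tsum_shift b a (-1,-1) (-1,0) (1,1) (0,1) (by simp [Prod.ext_iff]) (by simp [Prod.ext_iff]),
      Tsum_shift b a (-1,1) (0,1) (1,-1) (1,0) (by simp [Prod.ext_iff]) (by simp [Prod.ext_iff])]
  ring

end ArakawaAux

/-- First component `J₁ = J^{++}` of the Arakawa Jacobian on a doubly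
periodic grid with spacing `h`. -/
noncomputable def arakawaJ1 {M : ℕ} (h : ℝ) (a b : ZMod M × ZMod M → ℝ) :
    ZMod M × ZMod M → ℝ := fun p =>
  ((a (p.1 + 1, p.2) - a (p.1 - 1, p.2)) * (b (p.1, p.2 + 1) - b (p.1, p.2 - 1))
    - (a (p.1, p.2 + 1) - a (p.1, p.2 - 1)) * (b (p.1 + 1, p.2) - b (p.1 - 1, p.2)))
    / (4 * h ^ 2)

/-- Second component `J₂ = J^{+×}` of the Arakawa Jacobian. -/
noncomputable def arakawaJ2 {M : ℕ} (h : ℝ) (a b : ZMod M × ZMod M → ℝ) :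
    ZMod M × ZMod M → ℝ := fun p =>
  (a (p.1 + 1, p.2) * (b (p.1 + 1, p.2 + 1) - b (p.1 + 1, p.2 - 1))
    - a (p.1 - 1, p.2) * (b (p.1 - 1, p.2 + 1) - b (p.1 - 1, p.2 - 1))
    - a (p.1, p.2 + 1) * (b (p.1 + 1, p.2 + 1) - b (p.1 - 1, p.2 + 1))
    + a (p.1, p.2 - 1) * (b (p.1 + 1, p.2 - 1) - b (p.1 - 1, p.2 - 1)))
    / (4 * h ^ 2)

/-- Third component `J₃ = J^{×+}` of the Arakawa Jacobian. -/
noncomputable def arakawaJ3 {M : ℕ} (h : ℝ) (a b : ZMod M × ZMod M → ℝ) :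
    ZMod M × ZMod M → ℝ := fun p =>
  (a (p.1 + 1, p.2 + 1) * (b (p.1, p.2 + 1) - b (p.1 + 1, p.2))
    - a (p.1 - 1, p.2 - 1) * (b (p.1 - 1, p.2) - b (p.1, p.2 - 1))
    - a (p.1 - 1, p.2 + 1) * (b (p.1, p.2 + 1) - b (p.1 - 1, p.2))
    + a (p.1 + 1, p.2 - 1) * (b (p.1 + 1, p.2) - b (p.1, p.2 - 1)))
    / (4 * h ^ 2)

/-- The Arakawa Jacobian `J_A = (J₁ + J₂ + J₃)/3`. -/
noncomputable def arakawaJ {M : ℕ} (h : ℝ) (a b : ZMod M × ZMod M → ℝ) :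
    ZMod M × ZMod M → ℝ := fun p =>
  (arakawaJ1 h a b p + arakawaJ2 h a b p + arakawaJ3 h a b p) / 3

/-- The Arakawa Jacobian conserves the discrete enstrophy `Σ a·J_A(a,b)` and
energy `Σ b·J_A(a,b)`: both sums vanish on a doubly periodic grid. -/
theorem arakawa_conserves_energy_enstrophy
    (M : ℕ) [NeZero M] (hM : 3 ≤ M) (h : ℝ) (hh : 0 < h)
    (a b : ZMod M × ZMod M → ℝ) :
    ∑ p : ZMod M × ZMod M, a p * arakawaJ h a b p = 0 ∧
    ∑ p : ZMod M × ZMod M, b p * arakawaJ h a b p = 0 := by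
  have h0 : h ≠ 0 := ne_of_gt hh
  have hne : (12 * h ^ 2) ≠ 0 := by positivity
  have key : ∀ c : ZMod M × ZMod M → ℝ,
      ∑ p : ZMod M × ZMod M, c p * arakawaJ h a b p
        = (∑ p : ZMod M × ZMod M, c p * bigNum a b p) / (12 * h ^ 2) := by
    intro c
    rw [Finset.sum_div]
    refine Finset.sum_congr rfl fun p _ => ?_
    simp only [arakawaJ, arakawaJ1, arakawaJ2, arakawaJ3, bigNum]
    field_simp
    ring_nf
  constructor
  · rw [key a, sum_a_bigNum_eq_zero a b, zero_div]
  · rw [key b, sum_b_bigNum_eq_zero a b, zero_div]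
end
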